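/- arXiv:1607.02429 — 5 statements merged into one kernel-verified Lean document; each statement's English description precedes it below -/
import Mathlib

section
/- Let F be a field and let z1, z2, w1, w2 be non-zero elements of F. Then there exists a matrix U in GL_2(F) such that U^{-1}·(I + z1·E12)·U = I + w1·E12 and U^{-1}·(I + z2·E21)·U = I + w2·E21 if and only if z1·z2 = w1·w2. -/
/-!
Conjugation preserves the trace, and the product `(1 + z₁E₁₂)(1 + z₂E₂₁)` has trace `2 + z₁z₂`,
so `z₁z₂ = w₁w₂` is necessary. Conversely, conjugating by `diag(1, t)` scales `E₁₂` by `t` and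
`E₂₁` by `t⁻¹`; taking `t = w₁/z₁` gives `w₁` and `z₁z₂/w₁ = w₂`.
-/

open Matrix

theorem Units.inv_mul_one_add_mul {R : Type*} [Semiring R] (u : Rˣ) (x : R) :
    ↑u⁻¹ * (1 + x) * ↑u = 1 + ↑u⁻¹ * x * ↑u := by
  rw [mul_add, add_mul, mul_one, u.inv_mul]

theorem Units.inv_mul_mul_mul_inv_mul_mul {M : Type*} [Monoid M] (u : Mˣ) (x y : M) :
    ↑u⁻¹ * x * ↑u * (↑u⁻¹ * y * ↑u) = ↑u⁻¹ * (x * y) * ↑u := by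
  simp only [mul_assoc, Units.mul_inv_cancel_left]

namespace Matrix

variable {n R : Type*} [Fintype n] [DecidableEq n]

theorem diagonal_mul_single_mul_diagonal [Semiring R] (d e : n → R) (i j : n) (a : R) :
    diagonal d * single i j a * diagonal e = single i j (d i * a * e j) := by
  ext k l
  simp only [mul_diagonal, diagonal_mul, single_apply]
  split_ifs with h
  · rw [h.1, h.2]
  · simp

theorem units_map_diagonal_inv_mul_single_mul [Semiring R] (u : (n → R)ˣ) (i j : n) (a : R) :
    (↑(Units.map (diagonalRingHom n R).toMonoidHom u)⁻¹ : Matrix n n R) * single i j a *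
        (↑(Units.map (diagonalRingHom n R).toMonoidHom u) : Matrix n n R) =
      single i j ((↑u⁻¹ : n → R) i * a * (u : n → R) j) := by
  simp only [Units.coe_map, Units.coe_map_inv, RingHom.toMonoidHom_eq_coe, MonoidHom.coe_coe,
    diagonalRingHom_apply]
  exact diagonal_mul_single_mul_diagonal _ _ i j a

theorem trace_one_add_single_mul_one_add_single [CommSemiring R] {i j : n} (hij : i ≠ j)
    (a b : R) :
    trace ((1 + single i j a) * (1 + single j i b)) = Fintype.card n + a * b := by
  rw [mul_add, add_mul, add_mul, one_mul, mul_one, one_mul, single_mul_single_same, trace_add,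
    trace_add, trace_add, trace_one, trace_single_eq_of_ne _ _ _ hij,
    trace_single_eq_of_ne _ _ _ hij.symm, trace_single_eq_same, add_zero, zero_add]

end Matrix

theorem stmt_0_general {F : Type*} [Field F] (z1 z2 w1 w2 : F)
    (hz1 : z1 ≠ 0) (hw1 : w1 ≠ 0) :
    (∃ U : (Matrix (Fin 2) (Fin 2) F)ˣ,
        (↑U⁻¹ : Matrix (Fin 2) (Fin 2) F) * (1 + Matrix.single 0 1 z1) * (↑U : Matrix (Fin 2) (Fin 2) F) =
          1 + Matrix.single 0 1 w1 ∧
        (↑U⁻¹ : Matrix (Fin 2) (Fin 2) F) * (1 + Matrix.single 1 0 z2) * (↑U : Matrix (Fin 2) (Fin 2) F) =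
          1 + Matrix.single 1 0 w2) ↔
      z1 * z2 = w1 * w2 := by
  constructor
  · rintro ⟨U, h12, h21⟩
    have htrace := trace_units_conj' U ((1 + single 0 1 z1) * (1 + single 1 0 z2))
    rw [← Units.inv_mul_mul_mul_inv_mul_mul, h12, h21,
      trace_one_add_single_mul_one_add_single zero_ne_one,
      trace_one_add_single_mul_one_add_single zero_ne_one] at htrace
    exact (add_left_cancel htrace).symm
  · intro h
    let u : (Fin 2 → F)ˣ := MulEquiv.piUnits.symm ![1, Units.mk0 (w1 / z1) (div_ne_zero hw1 hz1)]
    refine ⟨Units.map (diagonalRingHom (Fin 2) F).toMonoidHom u, ?_, ?_⟩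
    · rw [Units.inv_mul_one_add_mul, units_map_diagonal_inv_mul_single_mul]
      simp [u, mul_div_cancel₀ w1 hz1]
    · rw [Units.inv_mul_one_add_mul, units_map_diagonal_inv_mul_single_mul]
      simp [u, div_mul_eq_mul_div, h, hw1]

/-- Lemma 2.1: for non-zero `z1, z2, w1, w2` in a field `F`, there is `U ∈ GL_2(F)` with
`(1 + z1·E₁₂)^U = 1 + w1·E₁₂` and `(1 + z2·E₂₁)^U = 1 + w2·E₂₁` iff `z1·z2 = w1·w2`. -/
theorem stmt_0 {F : Type*} [Field F] (z1 z2 w1 w2 : F)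
    (hz1 : z1 ≠ 0) (hz2 : z2 ≠ 0) (hw1 : w1 ≠ 0) (hw2 : w2 ≠ 0) :
    (∃ U : (Matrix (Fin 2) (Fin 2) F)ˣ,
        (↑U⁻¹ : Matrix (Fin 2) (Fin 2) F) * (1 + Matrix.single 0 1 z1) * (↑U : Matrix (Fin 2) (Fin 2) F) =
          1 + Matrix.single 0 1 w1 ∧
        (↑U⁻¹ : Matrix (Fin 2) (Fin 2) F) * (1 + Matrix.single 1 0 z2) * (↑U : Matrix (Fin 2) (Fin 2) F) =
          1 + Matrix.single 1 0 w2) ↔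
      z1 * z2 = w1 * w2 :=
  stmt_0_general z1 z2 w1 w2 hz1 hw1
end

section
/- Let G be a finite group, let g, h ∈ G with g ∉ N_G(⟨h⟩), and let m be the smallest positive integer such that g ∈ N_G(⟨h^m⟩). Let k be an integer with 1 ≤ k < o(h). Then the Bovdi units b_k(g,h̃) = h^k + (1-h)·g·h̃ and b_k(h̃,g) = h^k + h̃·g·(1-h) are units of the integral group ring ℤG, and if gcd(k,m) = 1 then both b_k(g,h̃) and b_k(h̃,g) have finite order equal to o(h^k) in the unit group U(ℤG). -/
/-- `h̃ = ∑_{x ∈ ⟨h⟩} x` in the group ring `R G`, written as `∑_{i < o(h)} h^i`. -/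
noncomputable def grpTilde (R : Type*) [CommRing R] {G : Type*} [Group G] (h : G) :
    MonoidAlgebra R G :=
  ∑ i ∈ Finset.range (orderOf h), MonoidAlgebra.of R G (h ^ i)

/-- Bovdi unit `b_k(g, h̃) = h^k + (1 - h)·g·h̃`. -/
noncomputable def bovdiL (R : Type*) [CommRing R] {G : Type*} [Group G] (g h : G) (k : ℕ) :
    MonoidAlgebra R G :=
  MonoidAlgebra.of R G (h ^ k) +
    (1 - MonoidAlgebra.of R G h) * MonoidAlgebra.of R G g * grpTilde R h

/-- Bovdi unit `b_k(h̃, g) = h^k + h̃·g·(1 - h)`. -/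
noncomputable def bovdiR (R : Type*) [CommRing R] {G : Type*} [Group G] (g h : G) (k : ℕ) :
    MonoidAlgebra R G :=
  MonoidAlgebra.of R G (h ^ k) +
    grpTilde R h * MonoidAlgebra.of R G g * (1 - MonoidAlgebra.of R G h)

/-!
Write `x = h^k` and `N` for the second summand of a Bovdi unit. Since `h̃ (1 - h) = (1 - h) h̃ = 0`
and `h̃` absorbs `⟨h⟩`, we have `N² = 0` and `N x = N` (resp. `x N = N`), so `x + N = (1 + N) x`
is a unit and `(x + N)^j = x^j + (1 + x + ⋯ + x^(j-1)) N`. For `j = o(x)` that sum is `x̃`, and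
`x̃ N = 0` because coprimality of `k` and `m` puts `h` in `⟨x⟩⟨h^m⟩`, while `g` normalises
`⟨h^m⟩ ≤ ⟨h⟩`; hence `(x + N)^o(x) = 1`. Conversely, multiplying `(x + N)^j = 1` by `h̃` gives
`o(h) (1 - x^j) = 0`, so `x^j = 1` over a ring of characteristic zero.
-/

open Finset MonoidAlgebra

section NilpotentPerturbation

variable {A : Type*} [Ring A] {x N : A}

theorem pow_add_eq_of_mul_self_eq_zero (hN : N * N = 0) (hNx : N * x = N) (j : ℕ) :
    (x + N) ^ j = x ^ j + (∑ i ∈ range j, x ^ i) * N := by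
  induction j with
  | zero => simp
  | succ j ih =>
    rw [pow_succ, ih, sum_range_succ, pow_succ]
    calc (x ^ j + (∑ i ∈ range j, x ^ i) * N) * (x + N)
        = x ^ j * x + x ^ j * N + (∑ i ∈ range j, x ^ i) * (N * x) +
            (∑ i ∈ range j, x ^ i) * (N * N) := by noncomm_ring
      _ = _ := by rw [hNx, hN]; noncomm_ring

theorem pow_add_eq_of_mul_self_eq_zero' (hN : N * N = 0) (hxN : x * N = N) (j : ℕ) :
    (x + N) ^ j = x ^ j + N * ∑ i ∈ range j, x ^ i := by
  apply MulOpposite.op_injective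
  simpa using
    pow_add_eq_of_mul_self_eq_zero (x := MulOpposite.op x) (N := MulOpposite.op N)
      (by rw [← MulOpposite.op_mul, hN, MulOpposite.op_zero])
      (by rw [← MulOpposite.op_mul, hxN]) j

theorem IsUnit.add_of_mul_self_eq_zero (hx : IsUnit x) (hN : N * N = 0) (hNx : N * x = N) :
    IsUnit (x + N) := by
  have hnil : IsNilpotent N := ⟨2, by rw [sq, hN]⟩
  rw [show x + N = (1 + N) * x by rw [add_mul, one_mul, hNx]]
  exact hnil.isUnit_one_add.mul hx

theorem IsUnit.add_of_mul_self_eq_zero' (hx : IsUnit x) (hN : N * N = 0) (hxN : x * N = N) :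
    IsUnit (x + N) := by
  have hnil : IsNilpotent N := ⟨2, by rw [sq, hN]⟩
  rw [show x + N = x * (1 + N) by rw [mul_add, mul_one, hxN]]
  exact hx.mul hnil.isUnit_one_add

end NilpotentPerturbation

section GroupRing

variable {R : Type*} [CommRing R] {G : Type*} [Group G] {h y : G}

theorem grpTilde_mul_of_self (h : G) : grpTilde R h * of R G h = grpTilde R h := by
  have e := sum_range_succ' (fun i ↦ of R G (h ^ i)) (orderOf h)
  rw [sum_range_succ, pow_orderOf_eq_one, pow_zero] at e
  rw [grpTilde, sum_mul]
  simp_rw [← map_mul, ← pow_succ]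
  exact (add_right_cancel e).symm

theorem of_self_mul_grpTilde (h : G) : of R G h * grpTilde R h = grpTilde R h := by
  have e := sum_range_succ' (fun i ↦ of R G (h ^ i)) (orderOf h)
  rw [sum_range_succ, pow_orderOf_eq_one, pow_zero] at e
  rw [grpTilde, mul_sum]
  simp_rw [← map_mul, ← pow_succ']
  exact (add_right_cancel e).symm

theorem grpTilde_mul_of_of_mem_zpowers (hy : y ∈ Subgroup.zpowers h) :
    grpTilde R h * of R G y = grpTilde R h := by
  rw [Subgroup.mem_zpowers_iff] at hy
  obtain ⟨n, rfl⟩ := hy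
  have hinv : grpTilde R h * of R G h⁻¹ = grpTilde R h := by
    conv_lhs => rw [← grpTilde_mul_of_self h, mul_assoc, ← map_mul, mul_inv_cancel, map_one,
      mul_one]
  induction n using Int.induction_on with
  | zero => rw [zpow_zero, map_one, mul_one]
  | succ n ih => rw [zpow_add_one, map_mul, ← mul_assoc, ih, grpTilde_mul_of_self]
  | pred n ih => rw [zpow_sub_one, map_mul, ← mul_assoc, ih, hinv]

theorem of_mul_grpTilde_of_mem_zpowers (hy : y ∈ Subgroup.zpowers h) :
    of R G y * grpTilde R h = grpTilde R h := by
  rw [Subgroup.mem_zpowers_iff] at hy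
  obtain ⟨n, rfl⟩ := hy
  have hinv : of R G h⁻¹ * grpTilde R h = grpTilde R h := by
    conv_lhs => rw [← of_self_mul_grpTilde h, ← mul_assoc, ← map_mul, inv_mul_cancel, map_one,
      one_mul]
  induction n using Int.induction_on with
  | zero => rw [zpow_zero, map_one, one_mul]
  | succ n ih => rw [zpow_add_one, map_mul, mul_assoc, of_self_mul_grpTilde, ih]
  | pred n ih => rw [zpow_sub_one, map_mul, mul_assoc, hinv, ih]

theorem grpTilde_mul_one_sub_of_self (h : G) : grpTilde R h * (1 - of R G h) = 0 := by
  rw [mul_sub, mul_one, grpTilde_mul_of_self, sub_self]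

theorem one_sub_of_self_mul_grpTilde (h : G) : (1 - of R G h) * grpTilde R h = 0 := by
  rw [sub_mul, one_mul, of_self_mul_grpTilde, sub_self]

theorem grpTilde_mul_self (h : G) : grpTilde R h * grpTilde R h = orderOf h • grpTilde R h := by
  calc grpTilde R h * grpTilde R h
      = ∑ i ∈ range (orderOf h), grpTilde R h * of R G (h ^ i) := mul_sum ..
    _ = orderOf h • grpTilde R h := by
      simp only [grpTilde_mul_of_of_mem_zpowers (Subgroup.npow_mem_zpowers h _), sum_const,
        card_range]

theorem eq_one_of_nsmul_one_sub_of_eq_zero [CharZero R] {n : ℕ} (hn : n ≠ 0)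
    (hy : n • (1 - of R G y) = 0) : y = 1 := by
  by_contra hy1
  have := congrArg (fun a : MonoidAlgebra R G ↦ a.coeff 1) hy
  simp only [coeff_smul_apply, coeff_sub, Finsupp.sub_apply, coeff_one_one, of_apply,
    coeff_single, Finsupp.single_eq_of_ne' hy1, sub_zero, nsmul_one, coeff_zero,
    Finsupp.zero_apply] at this
  exact hn (by exact_mod_cast this)

end GroupRing

section BovdiType

variable {R : Type*} [CommRing R] {G : Type*} [Group G] {h y : G}

theorem sum_range_orderOf_of_pow_eq_grpTilde (y : G) :
    ∑ i ∈ range (orderOf y), of R G y ^ i = grpTilde R y := by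
  simp only [grpTilde, map_pow]

theorem one_sub_of_mul_mul_grpTilde_mul_self (h : G) (a : MonoidAlgebra R G) :
    (1 - of R G h) * a * grpTilde R h * ((1 - of R G h) * a * grpTilde R h) = 0 := by
  rw [mul_assoc, ← mul_assoc (grpTilde R h), ← mul_assoc (grpTilde R h),
    grpTilde_mul_one_sub_of_self, zero_mul, zero_mul, mul_zero]

theorem grpTilde_mul_mul_one_sub_of_mul_self (h : G) (a : MonoidAlgebra R G) :
    grpTilde R h * a * (1 - of R G h) * (grpTilde R h * a * (1 - of R G h)) = 0 := by
  rw [← mul_assoc, mul_assoc _ (1 - of R G h), ← mul_assoc (1 - of R G h),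
    one_sub_of_self_mul_grpTilde, zero_mul, mul_zero, zero_mul]

theorem one_sub_of_mul_mul_grpTilde_mul_grpTilde (h : G) (a : MonoidAlgebra R G) :
    (1 - of R G h) * a * grpTilde R h * grpTilde R h =
      orderOf h • ((1 - of R G h) * a * grpTilde R h) := by
  rw [mul_assoc _ (grpTilde R h), grpTilde_mul_self, mul_smul_comm]

theorem grpTilde_mul_grpTilde_mul_mul_one_sub_of (h : G) (a : MonoidAlgebra R G) :
    grpTilde R h * (grpTilde R h * a * (1 - of R G h)) =
      orderOf h • (grpTilde R h * a * (1 - of R G h)) := by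
  rw [← mul_assoc, ← mul_assoc, grpTilde_mul_self, smul_mul_assoc, smul_mul_assoc]

theorem isUnit_of_add_one_sub_of_mul_mul_grpTilde (hy : y ∈ Subgroup.zpowers h)
    (a : MonoidAlgebra R G) :
    IsUnit (of R G y + (1 - of R G h) * a * grpTilde R h) :=
  ((Group.isUnit y).map (of R G)).add_of_mul_self_eq_zero
    (one_sub_of_mul_mul_grpTilde_mul_self h a)
    (by rw [mul_assoc, grpTilde_mul_of_of_mem_zpowers hy])

theorem isUnit_of_add_grpTilde_mul_mul_one_sub_of (hy : y ∈ Subgroup.zpowers h)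
    (a : MonoidAlgebra R G) :
    IsUnit (of R G y + grpTilde R h * a * (1 - of R G h)) :=
  ((Group.isUnit y).map (of R G)).add_of_mul_self_eq_zero'
    (grpTilde_mul_mul_one_sub_of_mul_self h a)
    (by rw [← mul_assoc, ← mul_assoc, of_mul_grpTilde_of_mem_zpowers hy])

end BovdiType

section Order

variable {R : Type*} [CommRing R] [CharZero R] {G : Type*} [Group G] {h y : G}

theorem orderOf_of_add_one_sub_of_mul_mul_grpTilde (hh : orderOf h ≠ 0)
    (hy : y ∈ Subgroup.zpowers h) (a : MonoidAlgebra R G)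
    (hkill : grpTilde R y * ((1 - of R G h) * a * grpTilde R h) = 0) :
    orderOf (of R G y + (1 - of R G h) * a * grpTilde R h) = orderOf y := by
  have hpow := pow_add_eq_of_mul_self_eq_zero (one_sub_of_mul_mul_grpTilde_mul_self h a)
    (by rw [mul_assoc, grpTilde_mul_of_of_mem_zpowers hy])
  have hNT := one_sub_of_mul_mul_grpTilde_mul_grpTilde h a
  generalize (1 - of R G h) * a * grpTilde R h = N at *
  rw [orderOf_eq_orderOf_iff]
  refine fun n ↦ ⟨fun hn ↦ eq_one_of_nsmul_one_sub_of_eq_zero (R := R) hh ?_, fun hn ↦ ?_⟩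
  · have hyT : of R G y ^ n * grpTilde R h = grpTilde R h := by
      rw [← map_pow]; exact of_mul_grpTilde_of_mem_zpowers (pow_mem hy n)
    -- right multiplication by `h̃` fixes `y ^ n` and multiplies `N` by `o(h)`
    calc orderOf h • (1 - of R G (y ^ n))
        = orderOf h • ((∑ i ∈ range n, of R G y ^ i) * N) := by
          rw [map_pow, ← hn, hpow, add_sub_cancel_left]
      _ = (of R G y + N) ^ n * grpTilde R h - of R G y ^ n * grpTilde R h := by
          rw [hpow, add_mul, add_sub_cancel_left, mul_assoc, hNT, mul_smul_comm]
      _ = 0 := by rw [hn, one_mul, hyT, sub_self]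
  · obtain ⟨t, rfl⟩ := orderOf_dvd_of_pow_eq_one hn
    rw [pow_mul, hpow, sum_range_orderOf_of_pow_eq_grpTilde, hkill, ← map_pow,
      pow_orderOf_eq_one, map_one, add_zero, one_pow]

theorem orderOf_of_add_grpTilde_mul_mul_one_sub_of (hh : orderOf h ≠ 0)
    (hy : y ∈ Subgroup.zpowers h) (a : MonoidAlgebra R G)
    (hkill : grpTilde R h * a * (1 - of R G h) * grpTilde R y = 0) :
    orderOf (of R G y + grpTilde R h * a * (1 - of R G h)) = orderOf y := by
  have hpow := pow_add_eq_of_mul_self_eq_zero' (grpTilde_mul_mul_one_sub_of_mul_self h a)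
    (by rw [← mul_assoc, ← mul_assoc, of_mul_grpTilde_of_mem_zpowers hy])
  have hTN := grpTilde_mul_grpTilde_mul_mul_one_sub_of h a
  generalize grpTilde R h * a * (1 - of R G h) = N at *
  rw [orderOf_eq_orderOf_iff]
  refine fun n ↦ ⟨fun hn ↦ eq_one_of_nsmul_one_sub_of_eq_zero (R := R) hh ?_, fun hn ↦ ?_⟩
  · have hTy : grpTilde R h * of R G y ^ n = grpTilde R h := by
      rw [← map_pow]; exact grpTilde_mul_of_of_mem_zpowers (pow_mem hy n)
    calc orderOf h • (1 - of R G (y ^ n))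
        = orderOf h • (N * ∑ i ∈ range n, of R G y ^ i) := by
          rw [map_pow, ← hn, hpow, add_sub_cancel_left]
      _ = grpTilde R h * (of R G y + N) ^ n - grpTilde R h * of R G y ^ n := by
          rw [hpow, mul_add, add_sub_cancel_left, ← mul_assoc, hTN, smul_mul_assoc]
      _ = 0 := by rw [hn, mul_one, hTy, sub_self]
  · obtain ⟨t, rfl⟩ := orderOf_dvd_of_pow_eq_one hn
    rw [pow_mul, hpow, sum_range_orderOf_of_pow_eq_grpTilde, hkill, ← map_pow,
      pow_orderOf_eq_one, map_one, add_zero, one_pow]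

end Order

theorem exists_zpow_pow_mul_zpow_pow_eq_self {G : Type*} [Group G] (h : G) {k m : ℕ}
    (hkm : Nat.Coprime k m) : ∃ a b : ℤ, (h ^ k) ^ a * (h ^ m) ^ b = h := by
  obtain ⟨a, b, hab⟩ := Nat.isCoprime_iff_coprime.mpr hkm
  refine ⟨a, b, ?_⟩
  rw [← zpow_natCast, ← zpow_natCast, ← zpow_mul, ← zpow_mul, ← zpow_add, mul_comm (k : ℤ),
    mul_comm (m : ℤ), hab, zpow_one]

section Annihilation

variable {R : Type*} [CommRing R] {G : Type*} [Group G] {g h y z w : G}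

theorem grpTilde_mul_one_sub_of_mul_of_mul_grpTilde_eq_zero (hz : z ∈ Subgroup.zpowers y)
    (hw : g⁻¹ * w * g ∈ Subgroup.zpowers h) (hzw : z * w = h) :
    grpTilde R y * ((1 - of R G h) * of R G g * grpTilde R h) = 0 := by
  have hhg : of R G h * of R G g = of R G z * of R G g * of R G (g⁻¹ * w * g) := by
    simp only [← map_mul, ← hzw]; group
  calc grpTilde R y * ((1 - of R G h) * of R G g * grpTilde R h)
      = grpTilde R y * of R G g * grpTilde R h -
          grpTilde R y * (of R G h * of R G g) * grpTilde R h := by noncomm_ring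
    _ = grpTilde R y * of R G g * grpTilde R h - (grpTilde R y * of R G z) * of R G g *
          (of R G (g⁻¹ * w * g) * grpTilde R h) := by rw [hhg]; noncomm_ring
    _ = 0 := by
      rw [grpTilde_mul_of_of_mem_zpowers hz, of_mul_grpTilde_of_mem_zpowers hw, sub_self]

theorem grpTilde_mul_of_mul_one_sub_of_mul_grpTilde_eq_zero (hz : z ∈ Subgroup.zpowers y)
    (hw : g * w * g⁻¹ ∈ Subgroup.zpowers h) (hwz : w * z = h) :
    grpTilde R h * of R G g * (1 - of R G h) * grpTilde R y = 0 := by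
  have hgh : of R G g * of R G h = of R G (g * w * g⁻¹) * of R G g * of R G z := by
    simp only [← map_mul, ← hwz]; group
  calc grpTilde R h * of R G g * (1 - of R G h) * grpTilde R y
      = grpTilde R h * of R G g * grpTilde R y -
          grpTilde R h * (of R G g * of R G h) * grpTilde R y := by noncomm_ring
    _ = grpTilde R h * of R G g * grpTilde R y - (grpTilde R h * of R G (g * w * g⁻¹)) *
          of R G g * (of R G z * grpTilde R y) := by rw [hgh]; noncomm_ring
    _ = 0 := by
      rw [grpTilde_mul_of_of_mem_zpowers hw, of_mul_grpTilde_of_mem_zpowers hz, sub_self]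

end Annihilation

theorem stmt_5_general {G : Type*} [Group G] [Fintype G] (g h : G)
    (m : ℕ) (hgm : g ∈ Subgroup.normalizer (Subgroup.zpowers (h ^ m) : Set G))
    (k : ℕ) :
    IsUnit (bovdiL ℤ g h k) ∧ IsUnit (bovdiR ℤ g h k) ∧
      (Nat.gcd k m = 1 →
        ∀ u : (MonoidAlgebra ℤ G)ˣ,
          ((↑u : MonoidAlgebra ℤ G) = bovdiL ℤ g h k ∨
            (↑u : MonoidAlgebra ℤ G) = bovdiR ℤ g h k) →
          orderOf u = orderOf (h ^ k)) := by
  have hk : h ^ k ∈ Subgroup.zpowers h := Subgroup.npow_mem_zpowers h k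
  refine ⟨isUnit_of_add_one_sub_of_mul_mul_grpTilde hk _,
    isUnit_of_add_grpTilde_mul_mul_one_sub_of hk _, fun hkm u hu ↦ ?_⟩
  have hh : orderOf h ≠ 0 := (orderOf_pos h).ne'
  have hconj : ∀ b : ℤ, g⁻¹ * (h ^ m) ^ b * g ∈ Subgroup.zpowers h ∧
      g * (h ^ m) ^ b * g⁻¹ ∈ Subgroup.zpowers h := fun b ↦
    have hsub := Subgroup.zpowers_le.mpr (Subgroup.npow_mem_zpowers h m)
    ⟨hsub ((Subgroup.mem_normalizer_iff''.mp hgm _).mp (Subgroup.zpow_mem_zpowers _ b)),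
      hsub ((Subgroup.mem_normalizer_iff.mp hgm _).mp (Subgroup.zpow_mem_zpowers _ b))⟩
  rw [← orderOf_units]
  rcases hu with hu | hu <;> rw [hu]
  · obtain ⟨a, b, hab⟩ := exists_zpow_pow_mul_zpow_pow_eq_self h hkm
    exact orderOf_of_add_one_sub_of_mul_mul_grpTilde hh hk _
      (grpTilde_mul_one_sub_of_mul_of_mul_grpTilde_eq_zero (Subgroup.zpow_mem_zpowers _ a)
        (hconj b).1 hab)
  · obtain ⟨b, a, hba⟩ := exists_zpow_pow_mul_zpow_pow_eq_self h (Nat.Coprime.symm hkm)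
    exact orderOf_of_add_grpTilde_mul_mul_one_sub_of hh hk _
      (grpTilde_mul_of_mul_one_sub_of_mul_grpTilde_eq_zero (Subgroup.zpow_mem_zpowers _ a)
        (hconj b).2 hba)

/-- Lemma 3.1(1): if `g ∉ N_G(⟨h⟩)`, `m` is the smallest positive integer with
`g ∈ N_G(⟨h^m⟩)`, and `1 ≤ k < o(h)`, then `b_k(g,h̃)` and `b_k(h̃,g)` are units of `ℤG`;
and if `gcd(k,m) = 1` they have finite order equal to `o(h^k)` in `U(ℤG)`. -/
theorem stmt_5 {G : Type*} [Group G] [Fintype G] (g h : G)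
    (hg : g ∉ Subgroup.normalizer (Subgroup.zpowers h : Set G))
    (m : ℕ) (hm : 0 < m) (hgm : g ∈ Subgroup.normalizer (Subgroup.zpowers (h ^ m) : Set G))
    (hmin : ∀ m' : ℕ, 0 < m' → g ∈ Subgroup.normalizer (Subgroup.zpowers (h ^ m') : Set G) → m ≤ m')
    (k : ℕ) (hk1 : 1 ≤ k) (hk2 : k < orderOf h) :
    IsUnit (bovdiL ℤ g h k) ∧ IsUnit (bovdiR ℤ g h k) ∧
      (Nat.gcd k m = 1 →
        ∀ u : (MonoidAlgebra ℤ G)ˣ,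
          ((↑u : MonoidAlgebra ℤ G) = bovdiL ℤ g h k ∨
            (↑u : MonoidAlgebra ℤ G) = bovdiR ℤ g h k) →
          orderOf u = orderOf (h ^ k)) :=
  stmt_5_general g h m hgm k
end

section
/- Let G be a finite group, g, h ∈ G, and k a positive integer. If the Bovdi unit b_k(g,h̃) = h^k + (1-h)·g·h̃ has finite order in the unit group of ℤG, then it is rationally conjugate to h^k, i.e. there exists a unit v of the rational group algebra ℚG such that v^{-1}·b_k(g,h̃)·v = h^k. -/
open Finset MonoidAlgebra

section Aux
variable {R : Type*} [CommRing R] {G : Type*} [Group G]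

noncomputable def nilb (R : Type*) [CommRing R] {G : Type*} [Group G] (g h : G) :
    MonoidAlgebra R G :=
  (1 - MonoidAlgebra.of R G h) * MonoidAlgebra.of R G g *
    (∑ i ∈ Finset.range (orderOf h), (MonoidAlgebra.of R G h) ^ i)

lemma tilde_mul_of (h : G) :
    (∑ i ∈ range (orderOf h), (of R G h) ^ i) * of R G h
      = ∑ i ∈ range (orderOf h), (of R G h) ^ i := by
  have h1 : ∑ i ∈ range (orderOf h + 1), (of R G h) ^ i
      = (∑ i ∈ range (orderOf h), (of R G h) ^ (i + 1)) + 1 := by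
    rw [Finset.sum_range_succ']; simp
  have h2 : ∑ i ∈ range (orderOf h + 1), (of R G h) ^ i
      = (∑ i ∈ range (orderOf h), (of R G h) ^ i) + 1 := by
    rw [Finset.sum_range_succ]
    congr 1
    rw [← map_pow, pow_orderOf_eq_one, map_one]
  rw [Finset.sum_mul]
  simp only [← pow_succ]
  exact add_right_cancel (h1.symm.trans h2)

lemma tilde_mul_pow (h : G) (j : ℕ) :
    (∑ i ∈ range (orderOf h), (of R G h) ^ i) * (of R G h) ^ j
      = ∑ i ∈ range (orderOf h), (of R G h) ^ i := by
  induction j with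
  | zero => simp
  | succ j ih => rw [pow_succ, ← mul_assoc, ih, tilde_mul_of]

lemma nilb_mul_pow (g h : G) (j : ℕ) :
    nilb R g h * (of R G h) ^ j = nilb R g h := by
  unfold nilb
  rw [mul_assoc, mul_assoc, tilde_mul_pow, ← mul_assoc]

lemma tilde_mul_sub (h : G) (X : MonoidAlgebra R G) :
    (∑ i ∈ range (orderOf h), (of R G h) ^ i) * ((1 - of R G h) * X) = 0 := by
  rw [← mul_assoc, mul_sub, mul_one, tilde_mul_of, sub_self, zero_mul]

lemma tilde_mul_nilb (g h : G) :
    (∑ i ∈ range (orderOf h), (of R G h) ^ i) * nilb R g h = 0 := by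
  have e : nilb R g h = (1 - of R G h) *
      (of R G g * ∑ i ∈ range (orderOf h), (of R G h) ^ i) := by
    rw [nilb, mul_assoc]
  rw [e, tilde_mul_sub]

lemma nilb_mul_nilb (g h : G) : nilb R g h * nilb R g h = 0 := by
  nth_rewrite 1 [nilb]
  rw [mul_assoc, tilde_mul_nilb, mul_zero]

lemma nilb_mul_sum (g h : G) (k m : ℕ) :
    nilb R g h * (∑ i ∈ range m, (of R G h) ^ (k * i)) = m • nilb R g h := by
  rw [Finset.mul_sum]
  simp only [nilb_mul_pow]
  rw [Finset.sum_const, Finset.card_range]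

lemma bov_pow (g h : G) (k m : ℕ) :
    ((of R G h) ^ k + nilb R g h) ^ m
      = (of R G h) ^ (k * m) + (∑ i ∈ range m, (of R G h) ^ (k * i)) * nilb R g h := by
  induction m with
  | zero => simp
  | succ m ih =>
    rw [pow_succ', ih, mul_add, mul_add, add_mul, add_mul]
    have e1 : nilb R g h * (of R G h) ^ (k * m) = nilb R g h := nilb_mul_pow g h _
    have e2 : nilb R g h * ((∑ i ∈ range m, (of R G h) ^ (k * i)) * nilb R g h) = 0 := by
      rw [← mul_assoc, nilb_mul_sum, smul_mul_assoc, nilb_mul_nilb, smul_zero]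
    have e3 : (∑ i ∈ range (m + 1), (of R G h) ^ (k * i))
        = (of R G h) ^ k * (∑ i ∈ range m, (of R G h) ^ (k * i)) + 1 := by
      rw [Finset.sum_range_succ', Finset.mul_sum]
      congr 1
      refine Finset.sum_congr rfl fun i _ => ?_
      rw [← pow_add, Nat.mul_succ]
      exact congrArg _ (Nat.add_comm _ _)
    rw [e1, e2, e3, add_mul, one_mul, add_zero, ← pow_add, mul_assoc,
      show k + k * m = k * (m + 1) by ring,
      show k * m + k * 1 = k * (m + 1) by ring]
    abel
end Aux

section Aux2
variable {R : Type*} [CommRing R] {G : Type*} [Group G]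

lemma nilb_mul_smulsum (g h : G) (k m : ℕ) :
    nilb R g h * (∑ i ∈ range m, (i : R) • (of R G h) ^ (k * i))
      = (∑ i ∈ range m, (i : R)) • nilb R g h := by
  rw [Finset.mul_sum, Finset.sum_smul]
  exact Finset.sum_congr rfl fun i _ => by rw [mul_smul_comm, nilb_mul_pow]

lemma tele (h : G) (k m : ℕ) :
    (1 - (of R G h) ^ k) * (∑ i ∈ range m, (i : R) • (of R G h) ^ (k * i))
      = (∑ i ∈ range m, (of R G h) ^ (k * i)) - 1 - ((m : R) - 1) • (of R G h) ^ (k * m) := by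
  induction m with
  | zero => simp
  | succ m ih =>
    have hA : (1 - (of R G h) ^ k) * ((of R G h) ^ (k * m))
        = (of R G h) ^ (k * m) - (of R G h) ^ (k * (m + 1)) := by
      rw [sub_mul, one_mul, ← pow_add, show k + k * m = k * (m + 1) by ring]
    rw [Finset.sum_range_succ, Finset.sum_range_succ, mul_add, ih, mul_smul_comm, hA,
      Nat.cast_succ]
    simp only [smul_sub, sub_smul, one_smul, add_smul]
    abel

noncomputable def intToRat (G : Type*) [Group G] :
    MonoidAlgebra ℤ G →+* MonoidAlgebra ℚ G :=
  MonoidAlgebra.liftNCRingHom (algebraMap ℤ (MonoidAlgebra ℚ G)) (MonoidAlgebra.of ℚ G)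
    fun x y => Algebra.commutes x (MonoidAlgebra.of ℚ G y)

lemma intToRat_of (x : G) : intToRat G (of ℤ G x) = of ℚ G x := by
  simp [intToRat, MonoidAlgebra.liftNCRingHom, MonoidAlgebra.of_apply]

end Aux2

/-- If the Bovdi unit `b_k(g,h̃)` has finite order in `U(ℤG)`, then it is rationally
conjugate to `h^k`: there is a unit `v` of `ℚG` with `v⁻¹·b_k(g,h̃)·v = h^k` (both sides
read in `ℚG`). -/
theorem stmt_7 {G : Type*} [Group G] [Fintype G] (g h : G) (k : ℕ) (hk : 0 < k)
    (hfin : ∃ u : (MonoidAlgebra ℤ G)ˣ,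
      (↑u : MonoidAlgebra ℤ G) = bovdiL ℤ g h k ∧ IsOfFinOrder u) :
    ∃ v : (MonoidAlgebra ℚ G)ˣ,
      (↑v⁻¹ : MonoidAlgebra ℚ G) * bovdiL ℚ g h k * (↑v : MonoidAlgebra ℚ G) =
        MonoidAlgebra.of ℚ G (h ^ k) := by
  classical
  obtain ⟨u, hu, hord⟩ := hfin
  obtain ⟨m, hm, hum⟩ := isOfFinOrder_iff_pow_eq_one.mp hord
  have hbQ : bovdiL ℚ g h k = (of ℚ G h) ^ k + nilb ℚ g h := by
    simp only [bovdiL, nilb, grpTilde, map_pow]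
  have hZ : (bovdiL ℤ g h k) ^ m = 1 := by
    rw [← hu, ← Units.val_pow_eq_pow_val, hum, Units.val_one]
  have hF : intToRat G (bovdiL ℤ g h k) = bovdiL ℚ g h k := by
    simp only [bovdiL, grpTilde, map_add, map_mul, map_sub, map_one, map_sum, intToRat_of]
  have hQpow : (bovdiL ℚ g h k) ^ m = 1 := by
    have h2 := congrArg (intToRat G) hZ
    rwa [map_pow, map_one, hF] at h2
  set M := m * orderOf h with hMdef
  have hMpos : 0 < M := Nat.mul_pos hm (orderOf_pos h)
  have hbM : (bovdiL ℚ g h k) ^ M = 1 := by rw [hMdef, pow_mul, hQpow, one_pow]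
  have hHkM : (of ℚ G h) ^ (k * M) = 1 := by
    rw [← map_pow,
      show h ^ (k * M) = 1 from
        orderOf_dvd_iff_pow_eq_one.mp ⟨k * m, by rw [hMdef]; ring⟩,
      map_one]
  rw [hbQ, bov_pow, hHkM] at hbM
  have hSn : (∑ i ∈ range M, (of ℚ G h) ^ (k * i)) * nilb ℚ g h = 0 := by
    rwa [add_eq_left] at hbM
  have hMne : (M : ℚ) ≠ 0 := Nat.cast_ne_zero.mpr hMpos.ne'
  have hkeyn : (1 - (of ℚ G h) ^ k) * (∑ i ∈ range M, (i : ℚ) • (of ℚ G h) ^ (k * i)) *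
        nilb ℚ g h = (-(M : ℚ)) • nilb ℚ g h := by
    rw [tele, hHkM, sub_mul, sub_mul, hSn, one_mul, smul_mul_assoc, one_mul, zero_sub,
      sub_smul, one_smul, neg_smul]
    abel
  set n := nilb ℚ g h with hndef
  set Y := ∑ i ∈ range M, (i : ℚ) • (of ℚ G h) ^ (k * i) with hYdef
  set y := (-(M : ℚ)⁻¹) • Y with hydef
  set w := y * n with hwdef
  have hnn : n * n = 0 := nilb_mul_nilb g h
  have hnHk : n * (of ℚ G h) ^ k = n := nilb_mul_pow g h k
  have hnY : n * Y = (∑ i ∈ range M, (i : ℚ)) • n := nilb_mul_smulsum g h k M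
  have hny : n * y = ((-(M : ℚ)⁻¹) * ∑ i ∈ range M, (i : ℚ)) • n := by
    rw [hydef, mul_smul_comm, hnY, smul_smul]
  have hnw : n * w = 0 := by rw [hwdef, ← mul_assoc, hny, smul_mul_assoc, hnn, smul_zero]
  have hwHk : w * (of ℚ G h) ^ k = w := by rw [hwdef, mul_assoc, hnHk]
  have hww : w * w = 0 := by
    have e : w * w = y * ((n * y) * n) := by rw [hwdef, mul_assoc, ← mul_assoc n y n]
    rw [e, hny]
    simp [hnn]
  have h3 : (1 - (of ℚ G h) ^ k) * y * n = n := by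
    rw [hydef, mul_smul_comm, smul_mul_assoc, hkeyn, smul_smul,
      show (-(M : ℚ)⁻¹) * (-(M : ℚ)) = 1 by field_simp, one_smul]
  have h4 : (1 - (of ℚ G h) ^ k) * y * n = w - (of ℚ G h) ^ k * w := by
    rw [sub_mul, one_mul, sub_mul, mul_assoc, hwdef]
  have hd : w - (of ℚ G h) ^ k * w = n := h4.symm.trans h3
  have p1 : (1 + w) * (1 - w) = 1 := by
    rw [mul_sub, mul_one, add_mul, one_mul, hww, add_zero, add_sub_cancel_right]
  have p2 : (1 - w) * (1 + w) = 1 := by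
    rw [mul_add, mul_one, sub_mul, one_mul, hww, sub_zero, sub_add_cancel]
  refine ⟨⟨1 + w, 1 - w, p1, p2⟩, ?_⟩
  show (1 - w) * bovdiL ℚ g h k * (1 + w) = MonoidAlgebra.of ℚ G (h ^ k)
  rw [hbQ, map_pow]
  have step1 : ((of ℚ G h) ^ k + n) * (1 + w) = (of ℚ G h) ^ k + w := by
    rw [mul_add, mul_one, add_mul, hnw, add_zero, ← hd]
    abel
  rw [mul_assoc, step1, sub_mul, one_mul, mul_add, hwHk, hww, add_zero,
    add_sub_cancel_right]
end

section
/- Let G be a finite group and let g, h ∈ G with g ∉ N_G(⟨h⟩) and o(h) = 2, and let k be an odd positive integer. Let u = b_k(g,h̃) = h^k + (1-h)·g·h̃ and w = b(g,h̃) = 1 + (1-h)·g·h̃. Then the subgroup ⟨u, w^{-1}·u·w⟩ of U(ℤG) is isomorphic to the infinite dihedral group, i.e. to the free product C_2 ⋆ C_2. -/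
/-!
Since `o(h) = 2` and `k` is odd, `h̃ = 1 + h` and `h^k = h`; put `x = h` and
`η = (1 - h) g (1 + h)`. From `h² = 1` one gets `η² = 0`, `η x = η` and
`x η = -η`, so that `u = x + η` and `w⁻¹ u w = (1 - η)(x + η)(1 + η) = x - η` are involutions
whose product is `1 + 2η`, with `n`-th power `1 + 2nη`. The coefficient of `g` in `η` is `1`
because `h g h ≠ g` (otherwise `g` would invert `h` and so normalize `⟨h⟩`); hence the product
has infinite order. Two involutions `a`, `b` with `a b` of infinite order generate a copy of
`C₂ ⋆ C₂`: every word in them is `(a b)ⁿ` or `(a b)ⁿ a`, and `(a b)ⁿ a = 1` is impossible since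
conjugation by `a` inverts `a b`.
-/

open Subgroup Monoid

section SquareZero

variable {R : Type*} [Ring R] {x η : R}

theorem one_add_pow_of_mul_self_eq_zero (hη : η * η = 0) (n : ℕ) : (1 + η) ^ n = 1 + n • η := by
  induction n with
  | zero => simp
  | succ n ih =>
    rw [pow_succ, ih, mul_add, mul_one, add_mul, one_mul, smul_mul_assoc, hη, smul_zero, add_zero,
      succ_nsmul]
    abel

theorem not_isOfFinOrder_one_add_of_mul_self_eq_zero (hη : η * η = 0)
    (hη₀ : ∀ n : ℕ, n ≠ 0 → n • η ≠ 0) : ¬IsOfFinOrder (1 + η) := by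
  rw [isOfFinOrder_iff_pow_eq_one]
  rintro ⟨n, hn, hpow⟩
  rw [one_add_pow_of_mul_self_eq_zero hη, add_eq_left] at hpow
  exact hη₀ n hn.ne' hpow

theorem one_sub_mul_mul_one_add_mul_self_eq_zero (hx : x * x = 1) (y : R) :
    (1 - x) * y * (1 + x) * ((1 - x) * y * (1 + x)) = 0 := by
  have h : (1 + x) * (1 - x) = 0 := by rw [mul_sub, mul_one, add_mul, one_mul, hx]; abel
  rw [mul_assoc, ← mul_assoc (1 + x), ← mul_assoc (1 + x), h, zero_mul, zero_mul, mul_zero]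

theorem one_sub_mul_mul_one_add_mul_eq_self (hx : x * x = 1) (y : R) :
    (1 - x) * y * (1 + x) * x = (1 - x) * y * (1 + x) := by
  rw [mul_assoc, add_mul, one_mul, hx, add_comm]

theorem mul_one_sub_mul_mul_one_add_eq_neg (hx : x * x = 1) (y : R) :
    x * ((1 - x) * y * (1 + x)) = -((1 - x) * y * (1 + x)) := by
  rw [← mul_assoc, ← mul_assoc, mul_sub, mul_one, hx, ← neg_sub, neg_mul, neg_mul]

end SquareZero

section Involutions

variable {M : Type*} [Group M] {a b : M}

def involutionHom (ha : a * a = 1) : Multiplicative (ZMod 2) →* M :=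
  AddMonoidHom.toMultiplicativeLeft
    (ZMod.lift 2 ⟨zmultiplesHom (Additive M) (Additive.ofMul a), by
      simp [two_zsmul, ← ofMul_mul, ha]⟩)

@[simp]
theorem involutionHom_ofAdd_one (ha : a * a = 1) : involutionHom ha (.ofAdd 1) = a := by
  simp only [involutionHom, AddMonoidHom.toMultiplicativeLeft_apply_apply, toAdd_ofAdd]
  rw [← Int.cast_one, ZMod.lift_coe]
  simp

theorem mul_zpow_eq_zpow_neg_mul (ha : a * a = 1) (hb : b * b = 1) (n : ℤ) :
    a * (a * b) ^ n = (a * b) ^ (-n) * a := by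
  have hconj : SemiconjBy a (a * b) (a * b)⁻¹ := by
    rw [SemiconjBy, mul_inv_rev, ← mul_assoc, ha, one_mul, inv_mul_cancel_right,
      inv_eq_of_mul_eq_one_right hb]
  have := hconj.zpow_right n
  rwa [inv_zpow, ← zpow_neg] at this

theorem exists_eq_zpow_or_eq_zpow_mul_of_mem_closure_pair (ha : a * a = 1) (hb : b * b = 1)
    {x : M} (hx : x ∈ closure {a, b}) : ∃ n : ℤ, x = (a * b) ^ n ∨ x = (a * b) ^ n * a := by
  have key := mul_zpow_eq_zpow_neg_mul ha hb
  induction hx using closure_induction with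
  | mem x hx =>
    rcases hx with rfl | rfl
    · exact ⟨0, .inr (by rw [zpow_zero, one_mul])⟩
    · refine ⟨-1, .inr ?_⟩
      rw [zpow_neg_one, mul_inv_rev, inv_mul_cancel_right, inv_eq_of_mul_eq_one_right hb]
  | one => exact ⟨0, .inl (zpow_zero _).symm⟩
  | mul x y _ _ hx hy =>
    obtain ⟨m, rfl | rfl⟩ := hx <;> obtain ⟨n, rfl | rfl⟩ := hy
    · exact ⟨m + n, .inl (zpow_add _ _ _).symm⟩
    · exact ⟨m + n, .inr (by rw [zpow_add, mul_assoc])⟩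
    · exact ⟨m - n, .inr (by rw [mul_assoc, key, ← mul_assoc, ← zpow_add, sub_eq_add_neg])⟩
    · refine ⟨m - n, .inl ?_⟩
      rw [mul_assoc, ← mul_assoc a, key, mul_assoc, ha, mul_one, ← zpow_add, sub_eq_add_neg]
  | inv x _ hx =>
    obtain ⟨m, rfl | rfl⟩ := hx
    · exact ⟨-m, .inl (zpow_neg _ _).symm⟩
    · refine ⟨m, .inr ?_⟩
      rw [mul_inv_rev, inv_eq_of_mul_eq_one_right ha, ← zpow_neg, key, neg_neg]

theorem zpow_mul_ne_one_of_not_isOfFinOrder (ha : a * a = 1) (hb : b * b = 1)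
    (hab : ¬IsOfFinOrder (a * b)) (n : ℤ) : (a * b) ^ n * a ≠ 1 := by
  intro h
  have hn : (a * b) ^ n = a := by
    rw [mul_eq_one_iff_eq_inv.mp h, inv_eq_of_mul_eq_one_right ha]
  have hneg : (a * b) ^ n = (a * b) ^ (-n) := by
    rw [← mul_left_inj a, ← mul_zpow_eq_zpow_neg_mul ha hb, hn]
  have hn₀ : n = 0 := by
    have := injective_zpow_iff_not_isOfFinOrder.mpr hab hneg
    omega
  rw [hn₀, zpow_zero] at hn
  apply hab
  rw [← hn, one_mul]
  exact isOfFinOrder_iff_pow_eq_one.mpr ⟨2, two_pos, by rw [pow_two, hb]⟩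

theorem Monoid.Coprod.closure_inl_ofAdd_one_inr_ofAdd_one :
    closure {Coprod.inl (.ofAdd 1), Coprod.inr (.ofAdd 1)} =
      (⊤ : Subgroup (Coprod (Multiplicative (ZMod 2)) (Multiplicative (ZMod 2)))) := by
  have h01 : ∀ m : Multiplicative (ZMod 2), m = 1 ∨ m = .ofAdd 1 := by decide
  refine eq_top_iff.mpr ?_
  rintro x -
  induction x using Coprod.induction_on with
  | inl m =>
    rcases h01 m with rfl | rfl
    · simp
    · exact subset_closure (by simp)
  | inr m =>
    rcases h01 m with rfl | rfl
    · simp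
    · exact subset_closure (by simp)
  | mul x y hx hy => exact mul_mem hx hy

theorem nonempty_closure_pair_mulEquiv_coprod (ha : a * a = 1) (hb : b * b = 1)
    (hab : ¬IsOfFinOrder (a * b)) :
    Nonempty (closure {a, b} ≃* Coprod (Multiplicative (ZMod 2)) (Multiplicative (ZMod 2))) := by
  let φ := Coprod.lift (involutionHom ha) (involutionHom hb)
  have hgen := Coprod.closure_inl_ofAdd_one_inr_ofAdd_one
  have hrange : φ.range = closure {a, b} := by
    rw [MonoidHom.range_eq_map, ← hgen, MonoidHom.map_closure, Set.image_pair]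
    simp [φ]
  have hinj : Function.Injective φ := by
    rw [injective_iff_map_eq_one]
    intro x hx
    have hσ : (.ofAdd 1 : Multiplicative (ZMod 2)) * .ofAdd 1 = 1 := by decide
    obtain ⟨n, rfl | rfl⟩ := exists_eq_zpow_or_eq_zpow_mul_of_mem_closure_pair
      (by rw [← map_mul, hσ, map_one]) (by rw [← map_mul, hσ, map_one]) (hgen ▸ mem_top x)
    · simp only [φ, map_zpow, map_mul, Coprod.lift_apply_inl, Coprod.lift_apply_inr,
        involutionHom_ofAdd_one] at hx
      rw [injective_zpow_iff_not_isOfFinOrder.mpr hab (hx.trans (zpow_zero _).symm), zpow_zero]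
    · simp only [φ, map_zpow, map_mul, Coprod.lift_apply_inl, Coprod.lift_apply_inr,
        involutionHom_ofAdd_one] at hx
      exact absurd hx (zpow_mul_ne_one_of_not_isOfFinOrder ha hb hab n)
  exact ⟨(MulEquiv.subgroupCongr hrange.symm).trans (MonoidHom.ofInjective hinj).symm⟩

end Involutions

theorem Units.nonempty_closure_conj_mulEquiv_coprod {R : Type*} [Ring R] {x η : R}
    (hx : x * x = 1) (hη : η * η = 0) (hηx : η * x = η) (hxη : x * η = -η)
    (hη₀ : ∀ n : ℕ, n ≠ 0 → n • η ≠ 0) {u w : Rˣ} (hu : (u : R) = x + η)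
    (hw : (w : R) = 1 + η) :
    Nonempty (closure {u, w⁻¹ * u * w} ≃*
      Coprod (Multiplicative (ZMod 2)) (Multiplicative (ZMod 2))) := by
  have huu : u * u = 1 := Units.ext <| by
    rw [Units.val_mul, hu, Units.val_one]
    simp only [mul_add, add_mul, hx, hη, hηx, hxη]
    abel
  have hvv : w⁻¹ * u * w * (w⁻¹ * u * w) = 1 := by
    rw [show w⁻¹ * u * w * (w⁻¹ * u * w) = w⁻¹ * (u * u) * w by group, huu]
    group
  have hw_inv : ((w⁻¹ : Rˣ) : R) = 1 - η := Units.inv_eq_of_mul_eq_one_right <| by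
    rw [hw, mul_sub, mul_one, add_mul, one_mul, hη]
    abel
  have hv : ((w⁻¹ * u * w : Rˣ) : R) = x - η := by
    rw [Units.val_mul, Units.val_mul, hw_inv, hu, hw]
    simp only [mul_add, add_mul, sub_mul, one_mul, mul_one, zero_mul, hη, hηx, hxη]
    abel
  have huv : ((u * (w⁻¹ * u * w) : Rˣ) : R) = 1 + 2 • η := by
    rw [Units.val_mul, hu, hv]
    simp only [mul_sub, add_mul, hx, hη, hηx, hxη]
    abel
  refine nonempty_closure_pair_mulEquiv_coprod huu hvv ?_
  rw [← Units.isOfFinOrder_val, huv]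
  refine not_isOfFinOrder_one_add_of_mul_self_eq_zero
    (by rw [smul_mul_smul_comm, hη, smul_zero]) fun n hn ↦ ?_
  rw [smul_smul]
  exact hη₀ _ (by omega)

theorem Subgroup.mem_normalizer_zpowers_of_mul_mul_eq {G : Type*} [Group G] {g h : G}
    (hgh : h * g * h = g) : g ∈ normalizer (zpowers h : Set G) := by
  have hconj : g * h * g⁻¹ = h⁻¹ := by
    calc g * h * g⁻¹ = h⁻¹ * (h * g * h) * g⁻¹ := by group
      _ = h⁻¹ := by rw [hgh]; group
  rw [mem_normalizer_iff_map_conj_eq, MonoidHom.map_zpowers]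
  simp [hconj]

namespace MonoidAlgebra

variable {R G : Type*} [Group G] {g h : G}

theorem grpTilde_of_orderOf_eq_two [CommRing R] (hord : orderOf h = 2) :
    grpTilde R h = 1 + of R G h := by
  rw [grpTilde, hord, Finset.sum_range_succ, Finset.sum_range_one, pow_zero, pow_one, map_one]

theorem bovdiL_of_orderOf_eq_two [CommRing R] (hord : orderOf h = 2) {k : ℕ} (hk : Odd k) :
    bovdiL R g h k = of R G h + (1 - of R G h) * of R G g * (1 + of R G h) := by
  rw [bovdiL, grpTilde_of_orderOf_eq_two hord, ← pow_mod_orderOf, hord, Nat.odd_iff.mp hk,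
    pow_one]

theorem coeff_one_sub_of_mul_of_mul_one_add_of [Ring R] (hh : h ≠ 1) (hgh : h * g * h ≠ g) :
    ((1 - of R G h) * of R G g * (1 + of R G h)).coeff g = 1 := by
  have hexpand : (1 - of R G h) * of R G g * (1 + of R G h) =
      of R G g + of R G (g * h) - of R G (h * g) - of R G (h * g * h) := by
    simp only [map_mul]
    noncomm_ring
  rw [hexpand]
  simp [of_apply, coeff_sub, coeff_add, hh, hgh]

end MonoidAlgebra

open MonoidAlgebra in
theorem stmt_10_general {G : Type*} [Group G] (g h : G)
    (hg : g ∉ Subgroup.normalizer (Subgroup.zpowers h : Set G)) (hord : orderOf h = 2)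
    (k : ℕ) (hodd : Odd k)
    (u w : (MonoidAlgebra ℤ G)ˣ)
    (hu : (↑u : MonoidAlgebra ℤ G) = bovdiL ℤ g h k)
    (hw : (↑w : MonoidAlgebra ℤ G) =
      1 + (1 - MonoidAlgebra.of ℤ G h) * MonoidAlgebra.of ℤ G g * grpTilde ℤ h) :
    Nonempty ((Subgroup.closure {u, w⁻¹ * u * w} : Subgroup (MonoidAlgebra ℤ G)ˣ) ≃*
      Monoid.Coprod (Multiplicative (ZMod 2)) (Multiplicative (ZMod 2))) := by
  have hh : h * h = 1 := by rw [← pow_two, ← hord, pow_orderOf_eq_one]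
  have hh₁ : h ≠ 1 := by rintro rfl; simp at hord
  have hgh : h * g * h ≠ g := fun e ↦ hg (mem_normalizer_zpowers_of_mul_mul_eq e)
  have hx : of ℤ G h * of ℤ G h = 1 := by rw [← map_mul, hh, map_one]
  refine Units.nonempty_closure_conj_mulEquiv_coprod hx
    (one_sub_mul_mul_one_add_mul_self_eq_zero hx _) (one_sub_mul_mul_one_add_mul_eq_self hx _)
    (mul_one_sub_mul_mul_one_add_eq_neg hx _) ?_ (hu.trans (bovdiL_of_orderOf_eq_two hord hodd))
    (hw.trans (by rw [grpTilde_of_orderOf_eq_two hord]))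
  intro n hn hzero
  have hcoeff := congrArg (fun y ↦ y.coeff g) hzero
  rw [coeff_smul_apply, coeff_one_sub_of_mul_of_mul_one_add_of hh₁ hgh, coeff_zero,
    Finsupp.zero_apply, nsmul_one, Nat.cast_eq_zero] at hcoeff
  exact hn hcoeff

/-- If `o(h) = 2`, `g ∉ N_G(⟨h⟩)` and `k` is odd, then for `u = b_k(g,h̃)` and the bicyclic
unit `w = b(g,h̃)`, the subgroup `⟨u, u^w⟩` of `U(ℤG)` is isomorphic to the infinite
dihedral group `C_2 ⋆ C_2`. -/
theorem stmt_10 {G : Type*} [Group G] [Fintype G] (g h : G)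
    (hg : g ∉ Subgroup.normalizer (Subgroup.zpowers h : Set G)) (hord : orderOf h = 2)
    (k : ℕ) (hk : 0 < k) (hodd : Odd k)
    (u w : (MonoidAlgebra ℤ G)ˣ)
    (hu : (↑u : MonoidAlgebra ℤ G) = bovdiL ℤ g h k)
    (hw : (↑w : MonoidAlgebra ℤ G) =
      1 + (1 - MonoidAlgebra.of ℤ G h) * MonoidAlgebra.of ℤ G g * grpTilde ℤ h) :
    Nonempty ((Subgroup.closure {u, w⁻¹ * u * w} : Subgroup (MonoidAlgebra ℤ G)ˣ) ≃*
      Monoid.Coprod (Multiplicative (ZMod 2)) (Multiplicative (ZMod 2))) :=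
  stmt_10_general g h hg hord k hodd u w hu hw
end

section
/- Let p be a prime, n a positive integer, and let G = ⟨g, h⟩ be a finite nilpotent group of nilpotency class 2 with o(h) = p^n and g ∉ N_G(⟨h^{p^i}⟩) for all 0 ≤ i < n. Set c = g^{-1}·h·g·h^{-1}. Then c is central in G of order exactly p^n, the subgroups ⟨h⟩ and ⟨c⟩ intersect trivially, the center of G equals ⟨g^{p^n}, c⟩, and the quotient G/Z(G) is isomorphic to C_{p^n} × C_{p^n}. -/
/-! In class 2 the commutator is multiplicative in each argument, so `c = ⁅h, g⁆` satisfies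
`⁅h ^ k, g⁆ = c ^ k`: thus `c ^ k = 1` iff `g` commutes with `h ^ k`, which pins the order of `c`
down to `p ^ n` and forces `⟨h⟩ ∩ Z(G) = 1`. Every element has the form `g ^ b * h ^ a * c ^ e`,
and `z ↦ (⁅z, g⁆, ⁅h, z⁆)` is a homomorphism with kernel `Z(G)` sending `g ^ b * h ^ a` to
`(c ^ a, c ^ b)`. It identifies `G ⧸ Z(G)` with `⟨c⟩ × ⟨c⟩`, and shows that `Z(G)` consists of the
elements with `p ^ n ∣ a` and `p ^ n ∣ b`. -/

open Subgroup
open scoped commutatorElement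

section CentralCommutators

variable {G : Type*} [Group G]

theorem commutatorElement_mem_center (hG : commutator G ≤ center G) (x y : G) :
    ⁅x, y⁆ ∈ center G :=
  hG (commutator_mem_commutator (mem_top x) (mem_top y))

theorem commutatorElement_mul_left (hG : commutator G ≤ center G) (x x' y : G) :
    ⁅x * x', y⁆ = ⁅x, y⁆ * ⁅x', y⁆ := by
  rw [commutatorElement_mul_left_eq_conj_mul,
    mem_center_iff.mp (commutatorElement_mem_center hG x' y) x, mul_inv_cancel_right,
    mem_center_iff.mp (commutatorElement_mem_center hG x y)]

theorem commutatorElement_mul_right (hG : commutator G ≤ center G) (x y y' : G) :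
    ⁅x, y * y'⁆ = ⁅x, y⁆ * ⁅x, y'⁆ := by
  rw [commutatorElement_mul_right_eq_mul_conj, mul_assoc _ y,
    mem_center_iff.mp (commutatorElement_mem_center hG x y') y, ← mul_assoc, mul_inv_cancel_right]

@[simps]
def commutatorLeftHom (hG : commutator G ≤ center G) (y : G) : G →* G where
  toFun x := ⁅x, y⁆
  map_one' := commutatorElement_one_left y
  map_mul' x x' := commutatorElement_mul_left hG x x' y

@[simps]
def commutatorRightHom (hG : commutator G ≤ center G) (x : G) : G →* G where
  toFun y := ⁅x, y⁆
  map_one' := commutatorElement_one_right x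
  map_mul' y y' := commutatorElement_mul_right hG x y y'

theorem commutatorElement_pow_left (hG : commutator G ≤ center G) (x y : G) (k : ℕ) :
    ⁅x ^ k, y⁆ = ⁅x, y⁆ ^ k :=
  map_pow (commutatorLeftHom hG y) x k

theorem commutatorElement_zpow_left (hG : commutator G ≤ center G) (x y : G) (k : ℤ) :
    ⁅x ^ k, y⁆ = ⁅x, y⁆ ^ k :=
  map_zpow (commutatorLeftHom hG y) x k

theorem commutatorElement_zpow_right (hG : commutator G ≤ center G) (x y : G) (k : ℤ) :
    ⁅x, y ^ k⁆ = ⁅x, y⁆ ^ k :=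
  map_zpow (commutatorRightHom hG x) y k

theorem zpow_mul_zpow_eq_mul_commutatorElement_zpow (hG : commutator G ≤ center G) (x y : G)
    (a b : ℤ) : x ^ a * y ^ b = y ^ b * x ^ a * ⁅x, y⁆ ^ (a * b) := by
  rw [zpow_mul, ← commutatorElement_zpow_left hG, ← commutatorElement_zpow_right hG,
    mem_center_iff.mp (commutatorElement_mem_center hG _ _) (y ^ b * x ^ a), commutatorElement_def]
  group

theorem exists_eq_zpow_mul_zpow_mul_commutatorElement_zpow (hG : commutator G ≤ center G)
    {x y : G} (hgen : closure {x, y} = ⊤) (z : G) :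
    ∃ a b e : ℤ, z = y ^ b * x ^ a * ⁅x, y⁆ ^ e := by
  have x_zpow_mul (k a b e : ℤ) :
      x ^ k * (y ^ b * x ^ a * ⁅x, y⁆ ^ e) = y ^ b * x ^ (k + a) * ⁅x, y⁆ ^ (k * b + e) := by
    have hc := mem_center_iff.mp (zpow_mem (commutatorElement_mem_center hG x y) (k * b))
    rw [← mul_assoc, ← mul_assoc, zpow_mul_zpow_eq_mul_commutatorElement_zpow hG,
      mul_assoc _ _ (x ^ a), ← hc]
    group
  induction (hgen ▸ mem_top z : z ∈ closure {x, y}) using closure_induction_left with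
  | one => exact ⟨0, 0, 0, by simp⟩
  | mul_left w hw z _ ih =>
    obtain ⟨a, b, e, rfl⟩ := ih
    rcases hw with rfl | rfl
    · exact ⟨1 + a, b, 1 * b + e, by simpa using x_zpow_mul 1 a b e⟩
    · exact ⟨a, 1 + b, e, by group⟩
  | inv_mul_cancel w hw z _ ih =>
    obtain ⟨a, b, e, rfl⟩ := ih
    rcases hw with rfl | rfl
    · exact ⟨-1 + a, b, -1 * b + e, by simpa using x_zpow_mul (-1) a b e⟩
    · exact ⟨a, -1 + b, e, by group⟩

@[simps!]
def commutatorPairHom (hG : commutator G ≤ center G) (x y : G) : G →* G × G :=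
  (commutatorLeftHom hG y).prod (commutatorRightHom hG x)

theorem commutatorPairHom_zpow_mul_zpow_mul_zpow (hG : commutator G ≤ center G) (x y : G)
    (a b e : ℤ) :
    commutatorPairHom hG x y (y ^ b * x ^ a * ⁅x, y⁆ ^ e) = (⁅x, y⁆ ^ a, ⁅x, y⁆ ^ b) := by
  have hce : commutatorPairHom hG x y (⁅x, y⁆ ^ e) = 1 := by
    have := mem_center_iff.mp (zpow_mem (commutatorElement_mem_center hG x y) e)
    simp [commutatorElement_eq_one_iff_mul_comm, this]
  rw [map_mul, hce, mul_one]
  simp [commutatorElement_mul_left hG, commutatorElement_mul_right hG,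
    commutatorElement_zpow_left hG, commutatorElement_zpow_right hG]

theorem center_eq_centralizer_of_closure_eq_top {s : Set G} (hgen : closure s = ⊤) :
    center G = centralizer s := by
  rw [← centralizer_closure, hgen, coe_top, centralizer_univ]

theorem ker_commutatorPairHom (hG : commutator G ≤ center G) {x y : G}
    (hgen : closure {x, y} = ⊤) : (commutatorPairHom hG x y).ker = center G := by
  ext z
  simp only [MonoidHom.mem_ker, commutatorPairHom_apply, Prod.mk_eq_one,
    commutatorElement_eq_one_iff_mul_comm, center_eq_centralizer_of_closure_eq_top hgen,
    mem_centralizer_iff, Set.forall_mem_insert, Set.mem_singleton_iff, forall_eq]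
  exact ⟨fun h ↦ ⟨h.2, h.1.symm⟩, fun h ↦ ⟨h.2.symm, h.1⟩⟩

theorem range_commutatorPairHom (hG : commutator G ≤ center G) {x y : G}
    (hgen : closure {x, y} = ⊤) :
    (commutatorPairHom hG x y).range = (zpowers ⁅x, y⁆).prod (zpowers ⁅x, y⁆) := by
  apply le_antisymm
  · rintro - ⟨z, rfl⟩
    obtain ⟨a, b, e, rfl⟩ := exists_eq_zpow_mul_zpow_mul_commutatorElement_zpow hG hgen z
    rw [commutatorPairHom_zpow_mul_zpow_mul_zpow]
    exact ⟨zpow_mem_zpowers _ a, zpow_mem_zpowers _ b⟩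
  · rintro ⟨-, -⟩ ⟨⟨a, rfl⟩, ⟨b, rfl⟩⟩
    exact ⟨_, commutatorPairHom_zpow_mul_zpow_mul_zpow hG x y a b 0⟩

theorem center_eq_closure_pow_orderOf_commutatorElement (hG : commutator G ≤ center G) {x y : G}
    (hgen : closure {x, y} = ⊤) :
    center G = closure {x ^ orderOf ⁅x, y⁆, y ^ orderOf ⁅x, y⁆, ⁅x, y⁆} := by
  have hN : ⁅x, y⁆ ^ (orderOf ⁅x, y⁆ : ℤ) = 1 := by rw [zpow_natCast, pow_orderOf_eq_one]
  rw [← ker_commutatorPairHom hG hgen]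
  apply le_antisymm
  · intro z hz
    obtain ⟨a, b, e, rfl⟩ := exists_eq_zpow_mul_zpow_mul_commutatorElement_zpow hG hgen z
    rw [MonoidHom.mem_ker, commutatorPairHom_zpow_mul_zpow_mul_zpow,
      Prod.mk_eq_one, ← orderOf_dvd_iff_zpow_eq_one, ← orderOf_dvd_iff_zpow_eq_one] at hz
    obtain ⟨⟨a, rfl⟩, ⟨b, rfl⟩⟩ := hz
    rw [zpow_mul, zpow_mul, zpow_natCast, zpow_natCast]
    exact mul_mem (mul_mem (zpow_mem (subset_closure (by simp)) _)
      (zpow_mem (subset_closure (by simp)) _)) (zpow_mem (subset_closure (by simp)) _)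
  · rw [closure_le]
    rintro - (rfl | rfl | rfl)
    · simpa [hN] using commutatorPairHom_zpow_mul_zpow_mul_zpow hG x y (orderOf ⁅x, y⁆) 0 0
    · simpa [hN] using commutatorPairHom_zpow_mul_zpow_mul_zpow hG x y 0 (orderOf ⁅x, y⁆) 0
    · rw [SetLike.mem_coe, ker_commutatorPairHom hG hgen]
      exact commutatorElement_mem_center hG x y

theorem nonempty_quotient_center_mulEquiv (hG : commutator G ≤ center G) {x y : G}
    (hgen : closure {x, y} = ⊤) :
    Nonempty (G ⧸ center G ≃*
      Multiplicative (ZMod (orderOf ⁅x, y⁆)) × Multiplicative (ZMod (orderOf ⁅x, y⁆))) := by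
  let e : zpowers ⁅x, y⁆ ≃* Multiplicative (ZMod (orderOf ⁅x, y⁆)) :=
    (zmodMulEquivOfGenerator (g := ⟨⁅x, y⁆, mem_zpowers _⟩) (fun ⟨_, k, hk⟩ ↦ ⟨k, Subtype.ext hk⟩)
      (Nat.card_zpowers _)).symm
  exact ⟨(QuotientGroup.quotientMulEquivOfEq (ker_commutatorPairHom hG hgen).symm).trans <|
    (QuotientGroup.quotientKerEquivRange _).trans <|
    (MulEquiv.subgroupCongr (range_commutatorPairHom hG hgen)).trans <|
    (Subgroup.prodEquiv _ _).trans (e.prodCongr e)⟩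

theorem orderOf_commutatorElement_eq_prime_pow (hG : commutator G ≤ center G) {x y : G}
    {p n : ℕ} [Fact p.Prime] (hx : orderOf x = p ^ (n + 1))
    (hy : y ∉ normalizer (zpowers (x ^ p ^ n) : Set G)) : orderOf ⁅x, y⁆ = p ^ (n + 1) := by
  refine orderOf_eq_prime_pow (fun h ↦ hy ?_) ?_
  · rw [← commutatorElement_pow_left hG, commutatorElement_eq_one_iff_commute] at h
    refine centralizer_le_normalizer _ ?_
    rw [zpowers_eq_closure, centralizer_closure, mem_centralizer_singleton_iff]
    exact h.eq.symm
  · rw [← commutatorElement_pow_left hG, ← hx, pow_orderOf_eq_one, commutatorElement_one_left]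

theorem zpowers_inf_center_eq_bot (hG : commutator G ≤ center G) {x y : G}
    (hxy : orderOf ⁅x, y⁆ = orderOf x) : zpowers x ⊓ center G = ⊥ := by
  rw [eq_bot_iff]
  rintro - ⟨⟨k, rfl⟩, hk⟩
  rw [mem_bot, ← orderOf_dvd_iff_zpow_eq_one, ← hxy, orderOf_dvd_iff_zpow_eq_one,
    ← commutatorElement_zpow_left hG, commutatorElement_eq_one_iff_mul_comm]
  exact (mem_center_iff.mp hk y).symm

end CentralCommutators

theorem stmt_19_general (p : ℕ) (hp : p.Prime) (n : ℕ) (hn : 0 < n)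
    {G : Type*} [Group G]
    (g h : G) (hgen : Subgroup.closure ({g, h} : Set G) = ⊤)
    (hclass : commutator G ≤ Subgroup.center G)
    (hord : orderOf h = p ^ n)
    (hnorm : ∀ i : ℕ, i < n → g ∉ Subgroup.normalizer (Subgroup.zpowers (h ^ p ^ i) : Set G)) :
    g⁻¹ * h * g * h⁻¹ ∈ Subgroup.center G ∧
    orderOf (g⁻¹ * h * g * h⁻¹) = p ^ n ∧
    Subgroup.zpowers h ⊓ Subgroup.zpowers (g⁻¹ * h * g * h⁻¹) = ⊥ ∧
    Subgroup.center G = Subgroup.closure {g ^ p ^ n, g⁻¹ * h * g * h⁻¹} ∧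
    Nonempty ((G ⧸ Subgroup.center G) ≃*
      (Multiplicative (ZMod (p ^ n)) × Multiplicative (ZMod (p ^ n)))) := by
  have := Fact.mk hp
  have hcz := commutatorElement_mem_center hclass h g
  have hc : g⁻¹ * h * g * h⁻¹ = ⁅h, g⁆ := calc
    g⁻¹ * h * g * h⁻¹ = ⁅g⁻¹, h⁆ := by rw [commutatorElement_def, inv_inv]
    _ = ⁅h, g⁆ := by rw [commutatorElement_inv_left, mem_center_iff.mp hcz, inv_mul_cancel_right]
  have hgen' : closure {h, g} = ⊤ := by rwa [Set.pair_comm]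
  obtain ⟨m, rfl⟩ := Nat.exists_eq_add_one_of_ne_zero hn.ne'
  have hord_c : orderOf ⁅h, g⁆ = p ^ (m + 1) :=
    orderOf_commutatorElement_eq_prime_pow hclass hord (hnorm m m.lt_add_one)
  rw [hc]
  refine ⟨hcz, hord_c, ?_, ?_, ?_⟩
  · exact le_bot_iff.mp <| zpowers_inf_center_eq_bot hclass (hord_c.trans hord.symm) ▸
      inf_le_inf_left _ (zpowers_le.mpr hcz)
  · rw [center_eq_closure_pow_orderOf_commutatorElement hclass hgen', hord_c, ← hord,
      pow_orderOf_eq_one, closure_insert_one]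
  · exact hord_c ▸ nonempty_quotient_center_mulEquiv hclass hgen'

/-- Structural facts from the proof of Theorem 4.1: for a finite group `G = ⟨g, h⟩` of
nilpotency class `2` (commutator subgroup central, non-abelian) with `o(h) = p^n` and
`g ∉ N_G(⟨h^{p^i}⟩)` for all `0 ≤ i < n`, the element `c = g⁻¹·h·g·h⁻¹` is central of
order exactly `p^n`, `⟨h⟩ ∩ ⟨c⟩ = 1`, `Z(G) = ⟨g^{p^n}, c⟩` and
`G/Z(G) ≅ C_{p^n} × C_{p^n}`. -/
theorem stmt_19 (p : ℕ) (hp : p.Prime) (n : ℕ) (hn : 0 < n)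
    {G : Type*} [Group G] [Fintype G]
    (g h : G) (hgen : Subgroup.closure ({g, h} : Set G) = ⊤)
    (hclass : commutator G ≤ Subgroup.center G) (hnab : ¬ ∀ a b : G, a * b = b * a)
    (hord : orderOf h = p ^ n)
    (hnorm : ∀ i : ℕ, i < n → g ∉ Subgroup.normalizer (Subgroup.zpowers (h ^ p ^ i) : Set G)) :
    g⁻¹ * h * g * h⁻¹ ∈ Subgroup.center G ∧
    orderOf (g⁻¹ * h * g * h⁻¹) = p ^ n ∧
    Subgroup.zpowers h ⊓ Subgroup.zpowers (g⁻¹ * h * g * h⁻¹) = ⊥ ∧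
    Subgroup.center G = Subgroup.closure {g ^ p ^ n, g⁻¹ * h * g * h⁻¹} ∧
    Nonempty ((G ⧸ Subgroup.center G) ≃*
      (Multiplicative (ZMod (p ^ n)) × Multiplicative (ZMod (p ^ n)))) :=
  stmt_19_general p hp n hn g h hgen hclass hord hnorm
end
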